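/- arXiv:1011.0495 — 2 statements merged into one kernel-verified Lean document; each statement's English description precedes it below -/
import Mathlib

section
/- Let D = (V, A) be a finite digraph and let s, t ∈ V with s ≠ t and (s, t) ∉ A. Then the maximum cardinality of a set of pairwise internally node-disjoint directed paths from s to t equals the minimum cardinality of an s–t disconnecting node set, i.e. of a set W ⊆ V \ {s, t} such that every directed path from s to t contains a vertex of W. -/
/-- The list of arcs traversed by a path given as a list of vertices. -/
def pathArcs {V : Type*} (p : List V) : List (V × V) := p.zip p.tail

/-- `p` is a directed path from `s` to `t` in the digraph with arc set `E`:
a nonempty list of pairwise distinct vertices, starting at `s`, ending at `t`,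
with consecutive vertices joined by arcs of `E`. -/
def IsPath {V : Type*} (E : Finset (V × V)) (s t : V) (p : List V) : Prop :=
  p.Nodup ∧ p.Chain' (fun u v => (u, v) ∈ E) ∧ p.head? = some s ∧ p.getLast? = some t

/-- Two paths are edge-disjoint if they share no arc. -/
def EdgeDisjoint {V : Type*} (p q : List V) : Prop :=
  ∀ a : V × V, a ∈ pathArcs p → a ∉ pathArcs q

/-- Two `s`–`t` paths are internally node-disjoint if the only vertices they share
are `s` and `t`. -/
def IntDisjoint {V : Type*} (s t : V) (p q : List V) : Prop :=
  ∀ v : V, v ∈ p → v ∈ q → v = s ∨ v = t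

/-- `P` is a set of pairwise edge-disjoint directed paths from `s` to `t`. -/
def IsEdgeDisjointFamily {V : Type*} (E : Finset (V × V)) (s t : V)
    (P : Finset (List V)) : Prop :=
  (∀ p ∈ P, IsPath E s t p) ∧ (P : Set (List V)).Pairwise EdgeDisjoint

/-- `P` is a set of pairwise internally node-disjoint directed paths from `s` to `t`. -/
def IsNodeDisjointFamily {V : Type*} (E : Finset (V × V)) (s t : V)
    (P : Finset (List V)) : Prop :=
  (∀ p ∈ P, IsPath E s t p) ∧ (P : Set (List V)).Pairwise (IntDisjoint s t)

/-!
Göring's proof. The set version (there are `k` disjoint `A`–`B` paths as soon as every `A`–`B`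
separator has at least `k` vertices) goes by induction on the number of arcs. If deleting an arc
`(x, y)` keeps every separator at size `≥ k`, induction applies. Otherwise some `S` with `#S < k`
separates `A` from `B` in `E - (x, y)`, and then `S + x` and `S + y` are separators of size `k`
in `E`. Every `A`–`(S + x)` separator and every `(S + y)`–`B` separator of `E - (x, y)` separates
`A` from `B` in `E`, so induction gives `k` disjoint paths from `A` onto `S + x` and `k` disjoint
paths from `S + y` to `B`. A path of the first family meets one of the second only in a vertex of
`S` (else `S` would not separate), so they can be joined at the vertices of `S` and along the arc
`(x, y)`.

The `s`–`t` theorem is the case where `A` and `B` are the out-neighbours of `s` and the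
in-neighbours of `t` in the digraph with `s` and `t` deleted.
-/

namespace List

variable {α : Type*} {R S : α → α → Prop}

theorem IsChain.imp_of_mem_dropLast_imp {l : List α}
    (H : ∀ a b, a ∈ l.dropLast → b ∈ l → R a b → S a b) (p : IsChain R l) : IsChain S l := by
  induction p with grind

theorem IsChain.exists_nodup_subset :
    ∀ {l : List α}, l.IsChain R → ∃ q : List α, q.IsChain R ∧ q.Nodup ∧
      q.head? = l.head? ∧ q.getLast? = l.getLast? ∧ q ⊆ l
  | [], _ => ⟨[], by simp⟩
  | [a], _ => ⟨[a], by simp⟩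
  | a :: b :: l, h => by
    obtain ⟨q, hq, hnd, hhd, hlast, hsub⟩ := (isChain_cons_cons.1 h).2.exists_nodup_subset
    have hq₀ : q ≠ [] := by rintro rfl; simp at hhd
    by_cases ha : a ∈ q
    · obtain ⟨q₁, q₂, rfl⟩ := append_of_mem ha
      refine ⟨a :: q₂, hq.suffix (suffix_append _ _), hnd.sublist (sublist_append_right _ _), rfl,
        ?_, fun v hv => mem_cons_of_mem a (hsub (mem_append_right q₁ hv))⟩
      rw [getLast?_cons_cons, ← hlast, getLast?_append_of_ne_nil _ (cons_ne_nil _ _)]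
    · refine ⟨a :: q, hq.cons ?_, nodup_cons.2 ⟨ha, hnd⟩, rfl, ?_, cons_subset_cons a hsub⟩
      · simpa [hhd] using (isChain_cons_cons.1 h).1
      · obtain ⟨c, q', rfl⟩ := exists_cons_of_ne_nil hq₀
        rw [getLast?_cons_cons, hlast, getLast?_cons_cons]

theorem exists_first {P : α → Prop} {l : List α} (h : ∃ a ∈ l, P a) :
    ∃ a, P a ∧ ∃ l₁ l₂, l = l₁ ++ a :: l₂ ∧ ∀ b ∈ l₁, ¬ P b := by
  classical
  obtain ⟨a, ha⟩ := Option.isSome_iff_exists.1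
    (find?_isSome (p := fun a => decide (P a)) |>.2 (by simpa using h))
  exact ⟨a, by simpa using find?_eq_some_iff_append.1 ha⟩

theorem subset_of_append_singleton_eq {l l₁ l₂ : List α} {a b : α}
    (h : l ++ [a] = l₁ ++ b :: l₂) : l₁ ⊆ l := by
  have := congrArg dropLast h
  rw [dropLast_concat, dropLast_append_cons] at this
  exact this ▸ subset_append_left _ _

end List

open Finset

section Linkage

variable {V : Type*}

def IsPathBetween (E : Finset (V × V)) (A B : Finset V) (p : List V) : Prop :=
  p.Nodup ∧ p.IsChain (fun u v => (u, v) ∈ E) ∧ (∃ a ∈ A, p.head? = some a) ∧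
    ∃ b ∈ B, p.getLast? = some b

def Separates (E : Finset (V × V)) (A B W : Finset V) : Prop :=
  ∀ p, IsPathBetween E A B p → ∃ v ∈ W, v ∈ p

def IsLinkage (E : Finset (V × V)) (A B : Finset V) (P : Finset (List V)) : Prop :=
  (∀ p ∈ P, IsPathBetween E A B p) ∧ (P : Set (List V)).Pairwise List.Disjoint

def IsFan (E : Finset (V × V)) (A X : Finset V) (l : V → List V) : Prop :=
  (∀ v ∈ X, IsPathBetween E A X (l v ++ [v]) ∧ ∀ u ∈ l v, u ∉ X) ∧
    (X : Set V).Pairwise fun u v => (l u ++ [u]).Disjoint (l v ++ [v])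

variable {E E' : Finset (V × V)} {A B W X : Finset V} {p : List V}

theorem IsPathBetween.mono (h : E ⊆ E') (hp : IsPathBetween E A B p) : IsPathBetween E' A B p :=
  ⟨hp.1, hp.2.1.imp fun _ _ hE => h hE, hp.2.2⟩

theorem IsLinkage.mono {P : Finset (List V)} (h : E ⊆ E') (hP : IsLinkage E A B P) :
    IsLinkage E' A B P :=
  ⟨fun p hp => (hP.1 p hp).mono h, hP.2⟩

theorem IsFan.mono {l : V → List V} (h : E ⊆ E') (hl : IsFan E A X l) : IsFan E' A X l :=
  ⟨fun v hv => ⟨((hl.1 v hv).1).mono h, (hl.1 v hv).2⟩, hl.2⟩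

theorem IsFan.eq_of_mem {l : V → List V} (hl : IsFan E A X l) {u v : V} (hv : v ∈ X)
    (hu : u ∈ l v ++ [v]) (huX : u ∈ X) : u = v := by
  rcases List.mem_append.1 hu with hu | hu
  · exact absurd huX ((hl.1 v hv).2 u hu)
  · simpa using hu

theorem IsPathBetween.ne_nil (hp : IsPathBetween E A B p) : p ≠ [] := by
  rintro rfl
  simp [IsPathBetween] at hp

theorem IsPathBetween.prefix {l r : List V} {w : V} (hp : IsPathBetween E A B (l ++ w :: r))
    (hw : w ∈ X) : IsPathBetween E A X (l ++ [w]) := by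
  have hpre : l ++ [w] <+: l ++ w :: r := ⟨r, by simp⟩
  obtain ⟨a, ha, hhd⟩ := hp.2.2.1
  refine ⟨hp.1.sublist hpre.sublist, hp.2.1.prefix hpre, ⟨a, ha, ?_⟩, ⟨w, hw, by simp⟩⟩
  rw [← hhd]
  simp [List.head?_append]

theorem IsPathBetween.append_cons {Y : Finset V} {l₁ l₂ : List V} {v : V}
    (hp : IsPathBetween E A X (l₁ ++ [v])) (hq : IsPathBetween E Y B (v :: l₂))
    (hdisj : ∀ a ∈ l₁, a ∉ v :: l₂) : IsPathBetween E A B (l₁ ++ v :: l₂) := by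
  obtain ⟨a, ha, hhd⟩ := hp.2.2.1
  obtain ⟨b, hb, hlast⟩ := hq.2.2.2
  refine ⟨List.nodup_append.2 ⟨hp.1.sublist (List.sublist_append_left _ _), hq.1,
    fun a ha b hb hab => hdisj a ha (hab ▸ hb)⟩, ?_, ⟨a, ha, ?_⟩, ⟨b, hb, ?_⟩⟩
  · simpa using hp.2.1.append_overlap (l₂ := [v]) hq.2.1 (List.cons_ne_nil _ _)
  · rw [← hhd]
    simp [List.head?_append]
  · rw [← hlast, List.getLast?_append_of_ne_nil _ (List.cons_ne_nil _ _)]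

theorem IsPathBetween.concat {Y : Finset V} {x : V} (hp : IsPathBetween E A B p) (hx : x ∉ p)
    (hpx : ∀ y ∈ p.getLast?, (y, x) ∈ E) (hxY : x ∈ Y) : IsPathBetween E A Y (p ++ [x]) := by
  obtain ⟨a, ha, hhd⟩ := hp.2.2.1
  refine ⟨hp.1.append (List.nodup_singleton x) (List.disjoint_singleton.2 hx),
    hp.2.1.append (List.isChain_singleton x) (by simpa using hpx), ⟨a, ha, ?_⟩, ⟨x, hxY, by simp⟩⟩
  rw [List.head?_append_of_ne_nil _ hp.ne_nil, hhd]

section Reverse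

variable [DecidableEq V]

theorem isPathBetween_swap_iff :
    IsPathBetween (E.image Prod.swap) B A p ↔ IsPathBetween E A B p.reverse := by
  unfold IsPathBetween
  simp [List.isChain_reverse]
  tauto

theorem separates_swap_iff : Separates (E.image Prod.swap) B A W ↔ Separates E A B W := by
  refine ⟨fun h p hp => ?_, fun h p hp => ?_⟩
  · simpa using h p.reverse (isPathBetween_swap_iff.2 (by simpa using hp))
  · simpa using h p.reverse (isPathBetween_swap_iff.1 hp)

end Reverse

end Linkage

section Separation

variable {V : Type*} {E : Finset (V × V)} {A B S T X : Finset V}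

theorem Separates.exists_mem_of_isChain (hS : Separates E A B S) {l : List V}
    (hl : l.IsChain fun u v => (u, v) ∈ E) (ha : ∃ a ∈ A, l.head? = some a)
    (hb : ∃ b ∈ B, l.getLast? = some b) : ∃ v ∈ S, v ∈ l := by
  obtain ⟨q, hq, hnd, hhd, hlast, hsub⟩ := hl.exists_nodup_subset
  obtain ⟨v, hvS, hvq⟩ := hS q ⟨hnd, hq, hhd ▸ ha, hlast ▸ hb⟩
  exact ⟨v, hvS, hsub hvq⟩

theorem separates_left : Separates E A B A := fun _ hp =>
  have ⟨a, ha, hhd⟩ := hp.2.2.1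
  ⟨a, ha, List.mem_of_head? hhd⟩

variable [DecidableEq V]

theorem separates_empty : Separates ∅ A B (A ∩ B) := by
  rintro (_ | ⟨v, _ | ⟨w, p⟩⟩) ⟨-, hchain, ⟨a, ha, hhd⟩, b, hb, hlast⟩
  · simp at hhd
  · simp only [List.head?_cons, Option.some.injEq, List.getLast?_singleton] at hhd hlast
    exact ⟨v, mem_inter.2 ⟨hhd ▸ ha, hlast ▸ hb⟩, List.mem_singleton_self v⟩
  · simp at hchain

/-- A path avoiding an endpoint of the arc `(x, y)` does not use it. -/
theorem Separates.insert_of_erase {x y v : V} (hS : Separates (E.erase (x, y)) A B S)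
    (hv : v = x ∨ v = y) : Separates E A B (insert v S) := by
  intro p hp
  by_cases hvp : v ∈ p
  · exact ⟨v, mem_insert_self v S, hvp⟩
  have hchain : p.IsChain fun a b => (a, b) ∈ E.erase (x, y) := by
    refine hp.2.1.imp_of_mem_imp fun a b ha hb hab => mem_erase.2 ⟨?_, hab⟩
    rintro ⟨rfl, rfl⟩
    rcases hv with rfl | rfl <;> contradiction
  obtain ⟨u, huS, hup⟩ := hS p ⟨hp.1, hchain, hp.2.2⟩
  exact ⟨u, mem_insert_of_mem huS, hup⟩

/-- Cutting an `A`–`B` path at its first vertex in `X ∋ x` gives an `A`–`X` path that does not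
use the arc `(x, y)`. -/
theorem Separates.trans_erase {x y : V} (hX : Separates E A B X) (hx : x ∈ X)
    (hT : Separates (E.erase (x, y)) A X T) : Separates E A B T := by
  intro p hp
  obtain ⟨v, hvX, hvp⟩ := hX p hp
  obtain ⟨w, hwX, l, r, rfl, hl⟩ := List.exists_first ⟨v, hvp, hvX⟩
  have hchain : (l ++ [w]).IsChain fun a b => (a, b) ∈ E.erase (x, y) := by
    refine (hp.prefix hwX).2.1.imp_of_mem_dropLast_imp fun a b ha _ hab => mem_erase.2 ⟨?_, hab⟩
    rintro ⟨rfl, -⟩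
    exact hl _ (by simpa using ha) hx
  obtain ⟨u, huT, hu⟩ := hT _ ⟨(hp.prefix hwX).1, hchain, (hp.prefix hwX).2.2⟩
  exact ⟨u, huT, (show l ++ [w] <+: l ++ w :: r from ⟨r, by simp⟩).subset hu⟩

end Separation

section Fans

variable {V : Type*} [DecidableEq V] {E : Finset (V × V)} {A B X : Finset V}

theorem exists_isLinkage_of_pairwise {φ : V → List V}
    (hφ : ∀ v ∈ X, IsPathBetween E A B (φ v))
    (hdisj : (X : Set V).Pairwise fun u v => (φ u).Disjoint (φ v)) :
    ∃ P, P.card = X.card ∧ IsLinkage E A B P := by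
  have hinj : Set.InjOn φ X := fun u hu v hv huv => by
    by_contra hne
    obtain ⟨a, ha⟩ := List.exists_mem_of_ne_nil _ (hφ u hu).ne_nil
    exact hdisj hu hv hne ha (huv ▸ ha)
  refine ⟨X.image φ, card_image_of_injOn hinj, ?_, ?_⟩
  · simp only [mem_image, forall_exists_index, and_imp]
    rintro _ v hv rfl
    exact hφ v hv
  · rw [coe_image, hinj.pairwise_image]
    exact hdisj

/-- Distinct paths of a linkage onto `X` are disjoint, so they have distinct first vertices in `X`;
with at least `#X` paths, every `v ∈ X` is the first vertex in `X` of one of them. -/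
theorem IsLinkage.exists_fan {P : Finset (List V)} (hP : IsLinkage E A X P)
    (hcard : X.card ≤ P.card) : ∃ l, IsFan E A X l := by
  have hsome (p) (hp : p ∈ P) : (p.find? (· ∈ X)).isSome := by
    obtain ⟨b, hb, hlast⟩ := (hP.1 p hp).2.2.2
    exact List.find?_isSome.2 ⟨b, List.mem_of_getLast? hlast, by simpa⟩
  have hfind (p) (hp : p ∈ P) := Option.eq_some_of_isSome (hsome p hp)
  have hinj (p q) (hp : p ∈ P) (hq : q ∈ P)
      (hpq : (p.find? (· ∈ X)).get (hsome p hp) = (q.find? (· ∈ X)).get (hsome q hq)) : p = q := by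
    by_contra hne
    exact hP.2 hp hq hne (List.mem_of_find?_eq_some (hfind p hp))
      (hpq ▸ List.mem_of_find?_eq_some (hfind q hq))
  have honto : ∀ v ∈ X, ∃ p ∈ P, p.find? (· ∈ X) = some v := by
    refine fun v hv => ?_
    obtain ⟨p, hp, rfl⟩ := surj_on_of_inj_on_of_card_le _
      (fun p hp => by simpa using List.find?_some (hfind p hp)) hinj hcard v hv
    exact ⟨p, hp, hfind p hp⟩
  choose! path hpathP hpath using honto
  have hsplit (v) (hv : v ∈ X) := List.find?_eq_some_iff_append.1 (hpath v hv) |>.2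
  choose! pre suf hpath_eq hpre using hsplit
  refine ⟨pre, fun v hv => ⟨?_, fun u hu => by simpa using hpre v hv u hu⟩,
    fun u hu v hv huv => ?_⟩
  · have h := hP.1 _ (hpathP v hv)
    rw [hpath_eq v hv] at h
    exact h.prefix hv
  · have hne : path u ≠ path v := fun h =>
      huv (Option.some_injective _ (by rw [← hpath u hu, ← hpath v hv, h]))
    have hsub (w) (hw : w ∈ X) : pre w ++ [w] ⊆ path w := by
      rw [hpath_eq w hw]
      exact (show pre w ++ [w] <+: pre w ++ w :: suf w from ⟨suf w, by simp⟩).subset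
    exact List.disjoint_of_subset_left (hsub u hu) (List.disjoint_of_subset_right (hsub v hv)
      (hP.2 (hpathP u hu) (hpathP v hv) hne))

theorem IsFan.reroute {l : V → List V} {x y : V} (hl : IsFan E A X l) (hy : y ∈ X)
    (hyx : (y, x) ∈ E) (hx : ∀ v ∈ X, x ∉ l v ++ [v]) :
    IsFan E A (insert x (X.erase y)) (Function.update l x (l y ++ [y])) := by
  refine ⟨fun v hv => ?_, fun u hu v hv huv => ?_⟩
  · rcases eq_or_ne v x with rfl | hvx
    · rw [Function.update_self]
      refine ⟨(hl.1 y hy).1.concat (hx y hy) (by simpa using hyx) hv, fun u hu huX => ?_⟩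
      rcases mem_insert.1 huX with rfl | huX
      · exact hx y hy hu
      · rcases List.mem_append.1 hu with hu | hu
        · exact (hl.1 y hy).2 u hu (mem_of_mem_erase huX)
        · obtain rfl := List.mem_singleton.1 hu
          exact notMem_erase u X huX
    · have hvX := mem_of_mem_erase ((mem_insert.1 hv).resolve_left hvx)
      have hp := (hl.1 v hvX).1
      rw [Function.update_of_ne hvx]
      refine ⟨⟨hp.1, hp.2.1, hp.2.2.1, v, hv, by simp⟩, fun u hu huX => ?_⟩
      rcases mem_insert.1 huX with rfl | huX
      · exact hx v hvX (List.mem_append_left _ hu)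
      · exact (hl.1 v hvX).2 u hu (mem_of_mem_erase huX)
  · have hmem (v) (hv : v ∈ insert x (X.erase y)) (hvx : v ≠ x) : v ∈ X ∧ v ≠ y :=
      (mem_erase.1 ((mem_insert.1 hv).resolve_left hvx)).symm
    have hdisj (v) (hv : v ∈ insert x (X.erase y)) (hvx : v ≠ x) :
        (l y ++ [y] ++ [x]).Disjoint (l v ++ [v]) :=
      List.disjoint_append_left.2 ⟨hl.2 hy (hmem v hv hvx).1 (hmem v hv hvx).2.symm,
        List.singleton_disjoint.2 (hx v (hmem v hv hvx).1)⟩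
    rcases eq_or_ne u x with hux | hux <;> rcases eq_or_ne v x with hvx | hvx
    · exact absurd (hux.trans hvx.symm) huv
    · subst hux
      simpa [Function.update_of_ne hvx] using hdisj v hv hvx
    · subst hvx
      simpa [Function.update_of_ne hux] using (hdisj u hu hux).symm
    · simpa [Function.update_of_ne hux, Function.update_of_ne hvx] using
        hl.2 (hmem u hu hux).1 (hmem v hv hvx).1 huv

/-- Otherwise the first path up to `w`, followed by the reverse of the second one from `w`, would
be an `A`–`B` walk avoiding `S`. -/
theorem Separates.mem_of_mem_fans {S Y : Finset V} {lf lg : V → List V} (hS : Separates E A B S)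
    (hf : IsFan E A X lf) (hg : IsFan (E.image Prod.swap) B Y lg) (hSX : S ⊆ X) (hSY : S ⊆ Y)
    {u v w : V} (hu : u ∈ X) (hv : v ∈ Y) (hwu : w ∈ lf u ++ [u]) (hwv : w ∈ lg v ++ [v]) :
    w ∈ S := by
  by_contra hwS
  obtain ⟨a₁, a₂, ha⟩ := List.append_of_mem hwu
  obtain ⟨b₁, b₂, hb⟩ := List.append_of_mem hwv
  have hfp := (hf.1 u hu).1
  have hgp := (hg.1 v hv).1
  rw [ha] at hfp
  rw [hb] at hgp
  have hchain : (a₁ ++ [w] ++ b₁.reverse).IsChain fun a b => (a, b) ∈ E := by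
    refine (hfp.2.1.prefix ⟨a₂, by simp⟩).append_overlap ?_ (List.cons_ne_nil _ _)
    have h := hgp.2.1.prefix (l₁ := b₁ ++ [w]) ⟨b₂, by simp⟩
    have h' : (b₁ ++ [w]).reverse.IsChain fun a b => (a, b) ∈ E :=
      List.isChain_reverse.2 (by simpa using h)
    simpa using h'
  obtain ⟨a, haA, hhd⟩ := hfp.2.2.1
  obtain ⟨b, hbB, hlast⟩ := hgp.2.2.1
  have hwalk_last : (a₁ ++ [w] ++ b₁.reverse).getLast? = some b := by
    rw [← hlast, List.append_assoc, List.getLast?_append_of_ne_nil _ (by simp),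
      show [w] ++ b₁.reverse = (b₁ ++ [w]).reverse by simp, List.getLast?_reverse]
    simp [List.head?_append]
  obtain ⟨z, hzS, hz⟩ := hS.exists_mem_of_isChain hchain
    ⟨a, haA, by rw [← hhd]; simp [List.head?_append]⟩ ⟨b, hbB, hwalk_last⟩
  simp only [List.append_assoc, List.singleton_append, List.mem_append, List.mem_cons,
    List.mem_reverse] at hz
  rcases hz with hz | rfl | hz
  · exact (hf.1 u hu).2 z (List.subset_of_append_singleton_eq ha hz) (hSX hzS)
  · exact hwS hzS
  · exact (hg.1 v hv).2 z (List.subset_of_append_singleton_eq hb hz) (hSY hzS)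

theorem IsFan.exists_isLinkage {lf lg : V → List V} (hf : IsFan E A X lf)
    (hg : IsFan (E.image Prod.swap) B X lg)
    (hcross : ∀ u ∈ X, ∀ v ∈ X, ∀ w ∈ lf u ++ [u], w ∈ lg v ++ [v] → w ∈ X) :
    ∃ P, P.card = X.card ∧ IsLinkage E A B P := by
  have hmeet {u v w} (hu : u ∈ X) (hv : v ∈ X) (hwu : w ∈ lf u ++ [u])
      (hwv : w ∈ lg v ++ [v]) : w = u ∧ w = v :=
    have hwX := hcross u hu v hv w hwu hwv
    ⟨hf.eq_of_mem hu hwu hwX, hg.eq_of_mem hv hwv hwX⟩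
  have hmem {v w} : w ∈ lf v ++ v :: (lg v).reverse ↔ w ∈ lf v ++ [v] ∨ w ∈ lg v ++ [v] := by
    simp only [List.mem_append, List.mem_cons, List.mem_reverse]
    tauto
  refine exists_isLinkage_of_pairwise (φ := fun v => lf v ++ v :: (lg v).reverse)
    (fun v hv => ?_) (fun u hu v hv huv w hwu hwv => ?_)
  · have hq : IsPathBetween E X B (v :: (lg v).reverse) := by
      simpa using isPathBetween_swap_iff.1 (hg.1 v hv).1
    refine (hf.1 v hv).1.append_cons hq fun a ha hav => ?_
    have hav : a = v := (hmeet hv hv (List.mem_append_left _ ha) (by simp_all [or_comm])).1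
    have hnd := (hf.1 v hv).1.1
    simp only [List.nodup_append, List.nodup_cons, List.mem_singleton] at hnd
    exact hnd.2.2 a ha v rfl hav
  · rcases hmem.1 hwu with hwu | hwu <;> rcases hmem.1 hwv with hwv | hwv
    · exact hf.2 hu hv huv hwu hwv
    · exact huv ((hmeet hu hv hwu hwv).1.symm.trans (hmeet hu hv hwu hwv).2)
    · exact huv ((hmeet hv hu hwv hwu).2.symm.trans (hmeet hv hu hwv hwu).1)
    · exact hg.2 hu hv huv hwu hwv

theorem exists_isLinkage_of_separates_erase {x y : V} {S : Finset V} {P Q : Finset (List V)}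
    (hxy : (x, y) ∈ E) (hS : Separates (E.erase (x, y)) A B S) (hx : x ∉ S) (hy : y ∉ S)
    (hP : IsLinkage (E.erase (x, y)) A (insert x S) P) (hPc : (insert x S).card ≤ P.card)
    (hQ : IsLinkage ((E.erase (x, y)).image Prod.swap) B (insert y S) Q)
    (hQc : (insert y S).card ≤ Q.card) :
    ∃ R, R.card = (insert x S).card ∧ IsLinkage E A B R := by
  obtain ⟨lf, hf⟩ := hP.exists_fan hPc
  obtain ⟨lg, hg⟩ := hQ.exists_fan hQc
  have hcross {u v w} (hu : u ∈ insert x S) (hv : v ∈ insert y S) (hwu : w ∈ lf u ++ [u])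
      (hwv : w ∈ lg v ++ [v]) : w ∈ S :=
    hS.mem_of_mem_fans hf hg (subset_insert _ _) (subset_insert _ _) hu hv hwu hwv
  have hg' := (hg.mono (image_subset_image (erase_subset _ _))).reroute (mem_insert_self y S)
    (by simpa using hxy) fun v hv hxv => hx (hcross (mem_insert_self x S) hv (by simp) hxv)
  rw [erase_insert hy] at hg'
  refine (hf.mono (erase_subset _ _)).exists_isLinkage hg' fun u hu v hv w hwu hwv => ?_
  rcases eq_or_ne v x with rfl | hvx
  · rw [Function.update_self, List.mem_append, List.mem_singleton] at hwv
    rcases hwv with hwv | rfl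
    · exact mem_insert_of_mem (hcross hu (mem_insert_self y S) hwu hwv)
    · exact hv
  · rw [Function.update_of_ne hvx] at hwv
    exact mem_insert_of_mem (hcross hu (mem_insert_of_mem ((mem_insert.1 hv).resolve_left hvx))
      hwu hwv)

theorem exists_isLinkage_of_le_card_inter {k : ℕ} (hk : k ≤ (A ∩ B).card) :
    ∃ P, P.card = k ∧ IsLinkage E A B P := by
  obtain ⟨T, hT, rfl⟩ := exists_subset_card_eq hk
  refine exists_isLinkage_of_pairwise (φ := fun v => [v]) (fun v hv => ?_) fun u _ v _ huv => ?_
  · exact ⟨List.nodup_singleton v, List.isChain_singleton v, ⟨v, (mem_inter.1 (hT hv)).1, rfl⟩,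
      ⟨v, (mem_inter.1 (hT hv)).2, rfl⟩⟩
  · simpa [eq_comm] using huv

theorem exists_isLinkage_of_le_card (E : Finset (V × V)) (A B : Finset V) (k : ℕ)
    (hk : ∀ W, Separates E A B W → k ≤ W.card) : ∃ P, P.card = k ∧ IsLinkage E A B P := by
  induction hn : E.card using Nat.strong_induction_on generalizing E A B k with
  | _ n ih =>
  rcases E.eq_empty_or_nonempty with rfl | ⟨⟨x, y⟩, hxy⟩
  · exact exists_isLinkage_of_le_card_inter (hk _ separates_empty)
  have hlt : (E.erase (x, y)).card < n := hn ▸ card_erase_lt_of_mem hxy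
  by_cases h : ∀ W, Separates (E.erase (x, y)) A B W → k ≤ W.card
  · obtain ⟨P, hP, hPl⟩ := ih _ hlt _ A B k h rfl
    exact ⟨P, hP, hPl.mono (erase_subset _ _)⟩
  push Not at h
  obtain ⟨S, hS, hSk⟩ := h
  have hxS := hS.insert_of_erase (Or.inl rfl)
  have hyS := hS.insert_of_erase (Or.inr rfl)
  have hxk := hk _ hxS
  have hyk := hk _ hyS
  have hx : x ∉ S := fun hx => by rw [insert_eq_of_mem hx] at hxk; omega
  have hy : y ∉ S := fun hy => by rw [insert_eq_of_mem hy] at hyk; omega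
  rw [card_insert_of_notMem hx] at hxk
  have hXsep (T) (hT : Separates (E.erase (x, y)) A (insert x S) T) : k ≤ T.card :=
    hk T (hxS.trans_erase (mem_insert_self x S) hT)
  have hYsep (T) (hT : Separates ((E.erase (x, y)).image Prod.swap) B (insert y S) T) :
      k ≤ T.card := by
    rw [image_erase Prod.swap_injective] at hT
    exact hk T (separates_swap_iff.1
      ((separates_swap_iff.2 hyS).trans_erase (mem_insert_self y S) hT))
  obtain ⟨P, hPc, hP⟩ := ih _ hlt _ A (insert x S) k hXsep rfl
  obtain ⟨Q, hQc, hQ⟩ :=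
    ih _ (by rwa [card_image_of_injective _ Prod.swap_injective]) _ B (insert y S) k hYsep rfl
  obtain ⟨R, hRc, hR⟩ := exists_isLinkage_of_separates_erase hxy hS hx hy hP
    (by rw [card_insert_of_notMem hx]; omega) hQ (by rw [card_insert_of_notMem hy]; omega)
  exact ⟨R, by rw [hRc, card_insert_of_notMem hx]; omega, hR⟩

end Fans

section STPaths

variable {V : Type*} {E : Finset (V × V)} {s t : V}

theorem IsPath.exists_eq_cons_append (hst : s ≠ t) {p : List V} (hp : IsPath E s t p) :
    ∃ q, p = s :: (q ++ [t]) := by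
  obtain ⟨-, -, hhd, hlast⟩ := hp
  obtain _ | ⟨a, p⟩ := p
  · simp at hhd
  obtain rfl : a = s := by simpa using hhd
  obtain rfl | ⟨q, b, rfl⟩ := p.eq_nil_or_concat'
  · exact absurd (by simpa using hlast) hst
  · rw [← List.cons_append, List.getLast?_concat, Option.some_inj] at hlast
    exact ⟨q, by rw [hlast]⟩

theorem IsNodeDisjointFamily.card_le {P : Finset (List V)} (hP : IsNodeDisjointFamily E s t P)
    {W : Finset V} (hWst : ∀ v ∈ W, v ≠ s ∧ v ≠ t)
    (hW : ∀ p, IsPath E s t p → ∃ v ∈ W, v ∈ p) : P.card ≤ W.card :=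
  card_le_card_of_forall_subsingleton (fun p v => v ∈ p) (fun p hp => hW p (hP.1 p hp))
    fun v hv p ⟨hp, hvp⟩ q ⟨hq, hvq⟩ => by
      by_contra hpq
      rcases hP.2 hp hq hpq v hvp hvq with h | h
      exacts [(hWst v hv).1 h, (hWst v hv).2 h]

variable [DecidableEq V]

def innerArcs (E : Finset (V × V)) (s t : V) : Finset (V × V) :=
  E.filter fun e => e.1 ≠ s ∧ e.1 ≠ t ∧ e.2 ≠ s ∧ e.2 ≠ t

def innerSucc (E : Finset (V × V)) (s t : V) : Finset V :=
  (E.filter fun e => e.1 = s ∧ e.2 ≠ s ∧ e.2 ≠ t).image Prod.snd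

def innerPred (E : Finset (V × V)) (s t : V) : Finset V :=
  (E.filter fun e => e.2 = t ∧ e.1 ≠ s ∧ e.1 ≠ t).image Prod.fst

@[simp] theorem mem_innerArcs {u v : V} :
    (u, v) ∈ innerArcs E s t ↔ (u, v) ∈ E ∧ u ≠ s ∧ u ≠ t ∧ v ≠ s ∧ v ≠ t := by
  simp [innerArcs]

@[simp] theorem mem_innerSucc {v : V} : v ∈ innerSucc E s t ↔ (s, v) ∈ E ∧ v ≠ s ∧ v ≠ t := by
  simp [innerSucc]

@[simp] theorem mem_innerPred {v : V} : v ∈ innerPred E s t ↔ (v, t) ∈ E ∧ v ≠ s ∧ v ≠ t := by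
  simp [innerPred]

theorem isPath_cons_append_iff (hst : s ≠ t) (hA : (s, t) ∉ E) {q : List V} :
    IsPath E s t (s :: (q ++ [t])) ↔
      IsPathBetween (innerArcs E s t) (innerSucc E s t) (innerPred E s t) q := by
  have hnd_iff : (s :: (q ++ [t])).Nodup ↔ q.Nodup ∧ s ∉ q ∧ t ∉ q := by
    simp [List.nodup_append, hst]
    aesop
  have hchain_iff (R : V → V → Prop) (hq : q ≠ []) :
      (s :: (q ++ [t])).IsChain R ↔ R s (q.head hq) ∧ q.IsChain R ∧ R (q.getLast hq) t := by
    simp [List.isChain_cons, List.isChain_append, List.head?_append_of_ne_nil _ hq,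
      List.getLast?_eq_some_getLast hq, List.head?_eq_some_head hq]
  constructor
  · rintro ⟨hnd, hchain, -, -⟩
    replace hchain : List.IsChain _ _ := hchain
    have hq : q ≠ [] := by
      rintro rfl
      exact hA (by simpa using hchain)
    obtain ⟨hqnd, hs, ht⟩ := hnd_iff.1 hnd
    obtain ⟨hsq, hqchain, hqt⟩ := (hchain_iff _ hq).1 hchain
    have hne (v) (hv : v ∈ q) : v ≠ s ∧ v ≠ t := ⟨fun h => hs (h ▸ hv), fun h => ht (h ▸ hv)⟩
    refine ⟨hqnd, hqchain.imp_of_mem_imp fun a b ha hb hab => ?_,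
      ⟨_, ?_, List.head?_eq_some_head hq⟩, ⟨_, ?_, List.getLast?_eq_some_getLast hq⟩⟩
    · exact mem_innerArcs.2 ⟨hab, (hne a ha).1, (hne a ha).2, (hne b hb).1, (hne b hb).2⟩
    · exact mem_innerSucc.2 ⟨hsq, hne _ (List.head_mem hq)⟩
    · exact mem_innerPred.2 ⟨hqt, hne _ (List.getLast_mem hq)⟩
  · rintro ⟨hnd, hchain, ⟨a, ha, hhd⟩, ⟨b, hb, hlast⟩⟩
    have hq : q ≠ [] := by
      rintro rfl
      simp at hhd
    rw [List.head?_eq_some_head hq, Option.some_inj] at hhd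
    rw [List.getLast?_eq_some_getLast hq, Option.some_inj] at hlast
    have hne : ∀ v ∈ q, v ≠ s ∧ v ≠ t := hchain.induction _ _
      (fun u v huv _ => (mem_innerArcs.1 huv).2.2.2) (fun _ => hhd ▸ (mem_innerSucc.1 ha).2)
    refine ⟨hnd_iff.2 ⟨hnd, fun h => (hne s h).1 rfl, fun h => (hne t h).2 rfl⟩,
      (hchain_iff _ hq).2 ⟨?_, hchain.imp fun u v h => (mem_innerArcs.1 h).1, ?_⟩, rfl,
      by rw [← List.cons_append, List.getLast?_concat]⟩
    · exact hhd ▸ (mem_innerSucc.1 ha).1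
    · exact hlast ▸ (mem_innerPred.1 hb).1

theorem Separates.exists_mem_filter_of_isPath (hst : s ≠ t) (hA : (s, t) ∉ E) {W : Finset V}
    (hW : Separates (innerArcs E s t) (innerSucc E s t) (innerPred E s t) W) {p : List V}
    (hp : IsPath E s t p) : ∃ v ∈ W.filter fun v => v ≠ s ∧ v ≠ t, v ∈ p := by
  obtain ⟨q, rfl⟩ := hp.exists_eq_cons_append hst
  obtain ⟨v, hvW, hvq⟩ := hW q ((isPath_cons_append_iff hst hA).1 hp)
  have hnd := hp.1
  simp only [List.nodup_cons, List.mem_append, List.mem_singleton, not_or] at hnd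
  refine ⟨v, mem_filter.2 ⟨hvW, ?_, ?_⟩, List.mem_cons_of_mem s (List.mem_append_left _ hvq)⟩
  · rintro rfl
    exact hnd.1.1 hvq
  · rintro rfl
    exact (List.nodup_append.1 hnd.2).2.2 v hvq v (List.mem_singleton_self v) rfl

theorem IsLinkage.exists_isNodeDisjointFamily (hst : s ≠ t) (hA : (s, t) ∉ E)
    {Q : Finset (List V)}
    (hQ : IsLinkage (innerArcs E s t) (innerSucc E s t) (innerPred E s t) Q) :
    ∃ P, P.card = Q.card ∧ IsNodeDisjointFamily E s t P := by
  have hinj : Function.Injective fun q : List V => s :: (q ++ [t]) := fun q q' h => by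
    simpa using h
  refine ⟨_, card_image_of_injective Q hinj, ?_, ?_⟩
  · simp only [mem_image, forall_exists_index, and_imp]
    rintro _ q hq rfl
    exact (isPath_cons_append_iff hst hA).2 (hQ.1 q hq)
  · rw [coe_image, hinj.injOn.pairwise_image]
    intro q hq q' hq' hne v hv hv'
    simp only [List.mem_cons, List.mem_append, List.not_mem_nil, or_false] at hv hv'
    rcases hv with rfl | hv | rfl
    · exact Or.inl rfl
    · rcases hv' with rfl | hv' | rfl
      · exact Or.inl rfl
      · exact absurd hv' (hQ.2 hq hq' hne hv)
      · exact Or.inr rfl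
    · exact Or.inr rfl

end STPaths

theorem menger_node_disjoint_general {V : Type*} [DecidableEq V]
    (E : Finset (V × V)) (s t : V) (hst : s ≠ t) (hA : (s, t) ∉ E) :
    ∃ k : ℕ,
      IsGreatest {n | ∃ P : Finset (List V), P.card = n ∧ IsNodeDisjointFamily E s t P} k ∧
      IsLeast {n | ∃ W : Finset V, W.card = n ∧ (∀ v ∈ W, v ≠ s ∧ v ≠ t) ∧
        ∀ p : List V, IsPath E s t p → ∃ v ∈ W, v ∈ p} k := by
  set seps := {n | ∃ W : Finset V, W.card = n ∧ (∀ v ∈ W, v ≠ s ∧ v ≠ t) ∧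
    ∀ p : List V, IsPath E s t p → ∃ v ∈ W, v ∈ p}
  have hfilter {W : Finset V}
      (hW : Separates (innerArcs E s t) (innerSucc E s t) (innerPred E s t) W) :
      (W.filter fun v => v ≠ s ∧ v ≠ t).card ∈ seps :=
    ⟨_, rfl, fun v hv => (mem_filter.1 hv).2, fun _ hp => hW.exists_mem_filter_of_isPath hst hA hp⟩
  have hne : seps.Nonempty := ⟨_, hfilter separates_left⟩
  obtain ⟨W, hWc, hWst, hW⟩ := Nat.sInf_mem hne
  refine ⟨sInf seps, ⟨?_, ?_⟩, Nat.sInf_mem hne, fun n hn => Nat.sInf_le hn⟩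
  · obtain ⟨Q, hQc, hQ⟩ := exists_isLinkage_of_le_card (innerArcs E s t) (innerSucc E s t)
      (innerPred E s t) (sInf seps) fun _ hW =>
        (Nat.sInf_le (hfilter hW)).trans (card_filter_le _ _)
    obtain ⟨P, hPc, hP⟩ := hQ.exists_isNodeDisjointFamily hst hA
    exact ⟨P, hPc.trans hQc, hP⟩
  · rintro n ⟨P, rfl, hP⟩
    exact hWc ▸ hP.card_le hWst hW

/-- **Menger's theorem.** In a finite digraph with `s ≠ t` and `(s, t) ∉ E`, the maximum
cardinality of a set of pairwise internally node-disjoint directed paths from `s` to `t`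
equals the minimum cardinality of an `s`–`t` disconnecting node set. -/
theorem menger_node_disjoint {V : Type*} [Fintype V] [DecidableEq V]
    (E : Finset (V × V)) (s t : V) (hst : s ≠ t) (hA : (s, t) ∉ E) :
    ∃ k : ℕ,
      IsGreatest {n | ∃ P : Finset (List V), P.card = n ∧ IsNodeDisjointFamily E s t P} k ∧
      IsLeast {n | ∃ W : Finset V, W.card = n ∧ (∀ v ∈ W, v ≠ s ∧ v ≠ t) ∧
        ∀ p : List V, IsPath E s t p → ∃ v ∈ W, v ∈ p} k :=
  menger_node_disjoint_general E s t hst hA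
end

section
/- Let G = (V, E) be a finite digraph, s, t ∈ V with s ≠ t, and let P be a set of k pairwise edge-disjoint directed paths from s to t. If there exists a directed path from s to t in the residual digraph of G with respect to P (an augmenting path), then there exists a set of k + 1 pairwise edge-disjoint directed paths from s to t in G. -/
/-- The flow-arcs: arcs used by some path of `P`. -/
def flowArcs {V : Type*} [DecidableEq V] (P : Finset (List V)) : Finset (V × V) :=
  P.biUnion (fun p => (pathArcs p).toFinset)

/-- The arc set of the residualArcs digraph of `E` with respect to the path set `P`:
all arcs of `E` that are not flow-arcs, together with the reversals of all flow-arcs. -/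
def residualArcs {V : Type*} [DecidableEq V] (E : Finset (V × V)) (P : Finset (List V)) :
    Finset (V × V) :=
  (E \ flowArcs P) ∪ (flowArcs P).image (fun a => (a.2, a.1))

/-! Describe an arc set by its net out-degrees (`netOut`). The `k` paths of `P` together have
net out-degree `k` at `s`, `-k` at `t` and `0` elsewhere; the augmenting path has `1` at `s` and
`-1` at `t`. Adding to the flow-arcs the arcs of the augmenting path that are not flow-arcs, and
deleting the flow-arcs it traverses backwards, yields an arc set `F ⊆ E` with the net
out-degrees of `k + 1` paths. Any such `F` splits into `k + 1` arc-disjoint `s`–`t` paths: the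
vertices reachable from `s` are closed under out-arcs, so their net out-degrees sum to at most
`0`, whereas if `t` were unreachable the surplus at `s` would make that sum positive. Hence
there is a path; delete its arcs and recurse. -/

open Finset

section PathArcs

variable {V : Type*}

@[simp]
lemma pathArcs_cons_cons (a b : V) (l : List V) :
    pathArcs (a :: b :: l) = (a, b) :: pathArcs (b :: l) := rfl

lemma nodup_pathArcs {p : List V} (hp : p.Nodup) : (pathArcs p).Nodup :=
  List.Nodup.of_map Prod.snd <| by
    rw [pathArcs, List.map_snd_zip (by simp)]
    exact hp.sublist (List.tail_sublist p)

lemma rel_of_mem_pathArcs {R : V → V → Prop} :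
    ∀ {p : List V}, p.IsChain R → ∀ a ∈ pathArcs p, R a.1 a.2
  | [], _, _, ha | [_], _, _, ha => by simp [pathArcs] at ha
  | _ :: _ :: _, h, _, ha => by
      rw [List.isChain_cons_cons] at h
      rcases List.mem_cons.mp ha with rfl | ha
      exacts [h.1, rel_of_mem_pathArcs h.2 _ ha]

lemma edgeDisjoint_iff_disjoint [DecidableEq V] {p q : List V} :
    EdgeDisjoint p q ↔ Disjoint (pathArcs p).toFinset (pathArcs q).toFinset := by
  simp [EdgeDisjoint, Finset.disjoint_left]

variable {E F : Finset (V × V)} {s t v w : V} {p : List V}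

lemma IsPath.mono (hEF : E ⊆ F) (hp : IsPath E s t p) : IsPath F s t p :=
  ⟨hp.1, hp.2.1.imp fun _ _ h => hEF h, hp.2.2⟩

lemma IsPath.pathArcs_subset [DecidableEq V] (hp : IsPath E s t p) :
    (pathArcs p).toFinset ⊆ E :=
  fun a ha => rel_of_mem_pathArcs hp.2.1 a (List.mem_toFinset.mp ha)

lemma IsPath.exists_extend (hp : IsPath E s v p) (hvw : (v, w) ∈ E) :
    ∃ q, IsPath E s w q := by
  obtain ⟨hnd, hc, hs, hv⟩ := hp
  by_cases hw : w ∈ p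
  · obtain ⟨a, b, rfl⟩ := List.append_of_mem hw
    have hpre : a ++ [w] <+: a ++ w :: b := ⟨b, by simp⟩
    refine ⟨a ++ [w], hnd.sublist hpre.sublist, hc.prefix hpre, ?_, List.getLast?_concat⟩
    cases a <;> simpa using hs
  · refine ⟨p ++ [w], ?_, hc.append (List.isChain_singleton w) ?_, ?_, List.getLast?_concat⟩
    · exact List.nodup_append.mpr
        ⟨hnd, List.nodup_singleton w, by simpa using fun x hx => ne_of_mem_of_not_mem hx hw⟩
    · simp [hv, hvw]
    · cases p <;> simp_all

end PathArcs

section NetOut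

variable {V : Type*} [DecidableEq V]

def netOut (F : Finset (V × V)) (v : V) : ℤ :=
  ∑ a ∈ F, ((if a.1 = v then 1 else 0) - if a.2 = v then 1 else 0)

variable {E F A : Finset (V × V)} {s t : V}

@[simp]
lemma netOut_singleton (s t v : V) :
    netOut {(s, t)} v = (if s = v then 1 else 0) - if t = v then 1 else 0 :=
  sum_singleton _ _

@[simp]
lemma netOut_empty (v : V) : netOut ∅ v = 0 := sum_empty

lemma netOut_union (h : Disjoint E F) (v : V) : netOut (E ∪ F) v = netOut E v + netOut F v :=
  sum_union h

lemma netOut_sdiff (h : F ⊆ E) (v : V) : netOut (E \ F) v = netOut E v - netOut F v :=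
  sum_sdiff_eq_sub h

lemma netOut_inter_add_sdiff (v : V) : netOut (A ∩ E) v + netOut (A \ E) v = netOut A v :=
  sum_inter_add_sum_sdiff _ _ _

lemma netOut_image_swap (v : V) : netOut (F.image Prod.swap) v = -netOut F v := by
  rw [netOut, sum_image fun a _ b _ h => Prod.swap_injective h, netOut, ← sum_neg_distrib]
  exact sum_congr rfl fun a _ => by simp

lemma sum_netOut (F : Finset (V × V)) (S : Finset V) :
    ∑ v ∈ S, netOut F v =
      ∑ a ∈ F, ((if a.1 ∈ S then 1 else 0) - if a.2 ∈ S then 1 else 0) := by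
  simp only [netOut]
  rw [sum_comm]
  simp [sum_sub_distrib]

lemma sum_map_pathArcs_telescope (v : V) :
    ∀ {p : List V} {s t : V}, p.head? = some s → p.getLast? = some t →
    ((pathArcs p).map fun a => ((if a.1 = v then 1 else 0) - if a.2 = v then 1 else 0 : ℤ)).sum =
      (if s = v then 1 else 0) - if t = v then 1 else 0
  | [], _, _, hs, _ => by simp at hs
  | [_], _, _, hs, ht => by simp_all [pathArcs]
  | a :: b :: l, s, t, hs, ht => by
      obtain rfl : a = s := by simpa using hs
      rw [pathArcs_cons_cons, List.map_cons, List.sum_cons,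
        sum_map_pathArcs_telescope v (s := b) rfl (by simpa using ht)]
      ring

lemma netOut_pathArcs {p : List V} (hp : IsPath E s t p) (v : V) :
    netOut (pathArcs p).toFinset v = netOut {(s, t)} v := by
  rw [netOut, List.sum_toFinset _ (nodup_pathArcs hp.1), netOut_singleton]
  exact sum_map_pathArcs_telescope v hp.2.2.1 hp.2.2.2

end NetOut

section FlowDecomposition

variable {V : Type*} [DecidableEq V] {E F : Finset (V × V)} {s t : V}

lemma exists_isPath_of_netOut_pos (hs : 0 < netOut F s)
    (hnn : ∀ v, v ≠ t → 0 ≤ netOut F v) :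
    ∃ p, IsPath F s t p := by
  classical
  by_contra ht
  set S := (insert s (F.image Prod.snd)).filter fun v => ∃ p, IsPath F s v p
  have hsS : s ∈ S := mem_filter.mpr
    ⟨mem_insert_self _ _, [s], List.nodup_singleton s, List.isChain_singleton s, rfl, rfl⟩
  have hclosed : ∀ a ∈ F, a.1 ∈ S → a.2 ∈ S := fun a ha h1 => by
    obtain ⟨p, hp⟩ := (mem_filter.mp h1).2
    exact mem_filter.mpr ⟨mem_insert_of_mem (mem_image_of_mem _ ha), hp.exists_extend ha⟩
  have hpos : 0 < ∑ v ∈ S, netOut F v := hs.trans_le <| single_le_sum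
    (fun v hv => hnn v fun hvt => ht (hvt ▸ (mem_filter.mp hv).2)) hsS
  have hnonpos : ∑ v ∈ S, netOut F v ≤ 0 := by
    rw [sum_netOut]
    refine sum_nonpos fun a ha => ?_
    by_cases h1 : a.1 ∈ S
    · simp [h1, hclosed a ha h1]
    · by_cases h2 : a.2 ∈ S <;> simp [h1, h2]
  exact hnonpos.not_gt hpos

lemma exists_edgeDisjointFamily_of_netOut (hst : s ≠ t) (m : ℕ)
    (hF : ∀ v, netOut F v = m * netOut {(s, t)} v) :
    ∃ Q : Finset (List V), Q.card = m ∧ IsEdgeDisjointFamily F s t Q := by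
  induction m generalizing F with
  | zero => exact ⟨∅, rfl, by simp [IsEdgeDisjointFamily]⟩
  | succ m ih =>
    obtain ⟨p, hp⟩ : ∃ p, IsPath F s t p :=
      exists_isPath_of_netOut_pos (by rw [hF]; simp [hst.symm]) fun v hvt => by
        rw [hF]; simp [hvt.symm]; split_ifs <;> positivity
    set A := (pathArcs p).toFinset
    obtain ⟨Q, hQ, hQpaths, hQdisj⟩ := ih (F := F \ A) fun v => by
      rw [netOut_sdiff hp.pathArcs_subset, hF, netOut_pathArcs hp]; push_cast; ring
    have hdisj : ∀ q ∈ Q, Disjoint A (pathArcs q).toFinset := fun q hq =>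
      disjoint_of_subset_right (hQpaths q hq).pathArcs_subset disjoint_sdiff
    have hpQ : p ∉ Q := fun hpQ => by
      have hs : netOut A s = netOut {(s, t)} s := netOut_pathArcs hp s
      rw [disjoint_self.mp (hdisj p hpQ)] at hs
      simp [hst.symm] at hs
    refine ⟨insert p Q, by rw [card_insert_of_notMem hpQ, hQ], ?_, ?_⟩
    · exact forall_mem_insert _ _ _ |>.mpr ⟨hp, fun q hq => (hQpaths q hq).mono sdiff_subset⟩
    · rw [coe_insert]
      exact hQdisj.insert fun q hq _ => ⟨edgeDisjoint_iff_disjoint.mpr (hdisj q hq),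
        edgeDisjoint_iff_disjoint.mpr (hdisj q hq).symm⟩

end FlowDecomposition

section Augmentation

variable {V : Type*} [DecidableEq V] {E F A : Finset (V × V)} {s t : V} {P : Finset (List V)}

lemma flowArcs_subset (hP : IsEdgeDisjointFamily E s t P) : flowArcs P ⊆ E :=
  biUnion_subset.mpr fun p hp => (hP.1 p hp).pathArcs_subset

lemma netOut_flowArcs (hP : IsEdgeDisjointFamily E s t P) (v : V) :
    netOut (flowArcs P) v = P.card * netOut {(s, t)} v := by
  have hdisj : (P : Set (List V)).PairwiseDisjoint fun p => (pathArcs p).toFinset :=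
    hP.2.mono' fun _ _ h => edgeDisjoint_iff_disjoint.mp h
  rw [flowArcs, netOut, sum_biUnion hdisj, ← nsmul_eq_mul, ← sum_const]
  exact sum_congr rfl fun p hp => netOut_pathArcs (hP.1 p hp) v

lemma exists_subset_netOut_eq_add (hFE : F ⊆ E) (hA : A ⊆ (E \ F) ∪ F.image Prod.swap) :
    ∃ F' ⊆ E, ∀ v, netOut F' v = netOut F v + netOut A v := by
  set B := (A \ (E \ F)).image Prod.swap
  have hBF : B ⊆ F := by
    intro b hb
    obtain ⟨a, ha, rfl⟩ := mem_image.mp hb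
    obtain ⟨c, hc, rfl⟩ := mem_image.mp ((mem_union.mp (hA (mem_sdiff.mp ha).1)).resolve_left
      (mem_sdiff.mp ha).2)
    simpa using hc
  have hdisj : Disjoint (F \ B) (A ∩ (E \ F)) :=
    disjoint_of_subset_left sdiff_subset <|
      disjoint_of_subset_right inter_subset_right disjoint_sdiff
  refine ⟨(F \ B) ∪ (A ∩ (E \ F)), union_subset (sdiff_subset.trans hFE)
    (inter_subset_right.trans sdiff_subset), fun v => ?_⟩
  rw [netOut_union hdisj, netOut_sdiff hBF, netOut_image_swap,
    ← netOut_inter_add_sdiff (A := A) (E := E \ F)]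
  ring

end Augmentation

theorem augmenting_path_gives_larger_family_general {V : Type*} [DecidableEq V]
    (E : Finset (V × V)) (s t : V) (hst : s ≠ t)
    (P : Finset (List V)) (k : ℕ) (hcard : P.card = k)
    (hP : IsEdgeDisjointFamily E s t P)
    (haug : ∃ α : List V, IsPath (residualArcs E P) s t α) :
    ∃ Q : Finset (List V), Q.card = k + 1 ∧ IsEdgeDisjointFamily E s t Q := by
  obtain ⟨α, hα⟩ := haug
  obtain ⟨F, hFE, hF⟩ := exists_subset_netOut_eq_add (flowArcs_subset hP) hα.pathArcs_subset
  obtain ⟨Q, hQ, hQpaths, hQdisj⟩ := exists_edgeDisjointFamily_of_netOut hst (k + 1) fun v => by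
    rw [hF, netOut_flowArcs hP, netOut_pathArcs hα, hcard]; push_cast; ring
  exact ⟨Q, hQ, fun q hq => (hQpaths q hq).mono hFE, hQdisj⟩

/-- If `P` is a set of `k` pairwise edge-disjoint `s`–`t` paths and the residual digraph
of `G` with respect to `P` contains a directed path from `s` to `t` (an augmenting path),
then there is a set of `k + 1` pairwise edge-disjoint `s`–`t` paths in `G`. -/
theorem augmenting_path_gives_larger_family {V : Type*} [Fintype V] [DecidableEq V]
    (E : Finset (V × V)) (s t : V) (hst : s ≠ t)
    (P : Finset (List V)) (k : ℕ) (hcard : P.card = k)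
    (hP : IsEdgeDisjointFamily E s t P)
    (haug : ∃ α : List V, IsPath (residualArcs E P) s t α) :
    ∃ Q : Finset (List V), Q.card = k + 1 ∧ IsEdgeDisjointFamily E s t Q :=
  augmenting_path_gives_larger_family_general E s t hst P k hcard hP haug
end
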